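/- Let Q = diag(q_1^2,…,q_n^2) and A the n×n nilpotent superdiagonal matrix. Then for any 1 ≤ i, j ≤ n and t ≥ 0, ∫_0^t e_i^T e^{A(t−s)} Q (e_j^T e^{A(t−s)})^T ds = Σ_{m=max{i,j}}^{n} q_m^2 · t^{2m−i−j+1} / ((m−i)! (m−j)! (2m−i−j+1)). -/

import Mathlib

open Finset intervalIntegral

/-- The `n × n` nilpotent matrix with ones on the superdiagonal. -/
def superdiag (n : ℕ) : Matrix (Fin n) (Fin n) ℝ :=
  Matrix.of fun i j => if (i : ℕ) + 1 = (j : ℕ) then 1 else 0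

/-! The entries of `exp ((t - s) • A)` are `(t - s) ^ (k - i) / (k - i)!` on and above the
diagonal, so the integrand is a finite combination of powers of `t - s`, each integrated by
`∫₀ᵗ (t - s) ^ p ds = t ^ (p + 1) / (p + 1)`. -/

open Nat in
theorem NormedSpace.exp_eq_sum_range_of_pow_eq_zero (𝕂 : Type*) {𝔸 : Type*} [Field 𝕂]
    [CharZero 𝕂] [Ring 𝔸] [Algebra 𝕂 𝔸] [TopologicalSpace 𝔸] [IsTopologicalRing 𝔸] {a : 𝔸}
    {N : ℕ} (h : a ^ N = 0) : exp a = ∑ p ∈ range N, (p !⁻¹ : 𝕂) • a ^ p := by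
  rw [exp_eq_tsum 𝕂]
  refine tsum_eq_sum fun p hp => ?_
  rw [pow_eq_zero_of_le (by simpa using hp) h, smul_zero]

theorem superdiag_pow_apply (n p : ℕ) (i k : Fin n) :
    (superdiag n ^ p) i k = if (i : ℕ) + p = k then 1 else 0 := by
  induction p generalizing k with
  | zero => simp [Matrix.one_apply, Fin.ext_iff]
  | succ p ih =>
    rw [pow_succ, Matrix.mul_apply]
    simp only [ih]
    simp only [superdiag, Matrix.of_apply, mul_ite, mul_one, mul_zero]
    rw [Fin.sum_univ_eq_sum_range fun l => if l + 1 = (k : ℕ) then if (i : ℕ) + p = l then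
      (1 : ℝ) else 0 else 0]
    simp_rw [← ite_and, and_comm (a := _ + 1 = _), ite_and, sum_ite_eq, mem_range, ← ite_and]
    congr 1
    grind

theorem superdiag_pow_self (n : ℕ) : superdiag n ^ n = 0 := by
  ext i k
  simp only [superdiag_pow_apply, Matrix.zero_apply, ite_eq_right_iff]
  omega

theorem exp_smul_superdiag_apply (n : ℕ) (c : ℝ) (i k : Fin n) :
    NormedSpace.exp (c • superdiag n) i k =
      if i ≤ k then c ^ ((k : ℕ) - i) / ((k : ℕ) - i).factorial else 0 := by
  have h_nil : (c • superdiag n) ^ n = 0 := by rw [smul_pow, superdiag_pow_self, smul_zero]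
  rw [NormedSpace.exp_eq_sum_range_of_pow_eq_zero ℝ h_nil, Matrix.sum_apply]
  simp only [smul_pow, Matrix.smul_apply, superdiag_pow_apply, smul_eq_mul, mul_ite, mul_one,
    mul_zero]
  have h_index : ∀ p, (i : ℕ) + p = k ↔ (k : ℕ) - i = p ∧ i ≤ k := fun p => by
    rw [Fin.le_def]
    omega
  have h_lt : (k : ℕ) - i < n := by omega
  simp [h_index, ite_and, h_lt, div_eq_inv_mul]

theorem exp_smul_superdiag_apply_mul_apply (n : ℕ) (c a : ℝ) (i j k : Fin n) :
    NormedSpace.exp (c • superdiag n) i k * a * NormedSpace.exp (c • superdiag n) j k =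
      if i ≤ k ∧ j ≤ k then
        a / (((k : ℕ) - i).factorial * ((k : ℕ) - j).factorial) * c ^ (2 * (k : ℕ) - i - j)
      else 0 := by
  simp only [exp_smul_superdiag_apply]
  by_cases hk : i ≤ k ∧ j ≤ k
  · rw [if_pos hk.1, if_pos hk.2, if_pos hk]
    rw [show 2 * (k : ℕ) - i - j = ((k : ℕ) - i) + ((k : ℕ) - j) by omega, pow_add]
    ring
  · rw [if_neg hk]
    obtain hik | hjk := not_and_or.1 hk
    · rw [if_neg hik, zero_mul, zero_mul]
    · rw [if_neg hjk, mul_zero]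

theorem integral_const_sub_pow (t : ℝ) (p : ℕ) :
    ∫ s in (0 : ℝ)..t, (t - s) ^ p = t ^ (p + 1) / (p + 1) := by
  simp [integral_comp_sub_left (fun u => u ^ p) t, integral_pow]

theorem stmt_11_general (n : ℕ) (q : Fin n → ℝ) (i j : Fin n) (t : ℝ) :
    ∫ s in (0 : ℝ)..t,
        ∑ k : Fin n,
          (NormedSpace.exp ((t - s) • superdiag n)) i k * (q k ^ 2) *
            (NormedSpace.exp ((t - s) • superdiag n)) j k =
      ∑ m ∈ Finset.univ.filter (fun m : Fin n => i ≤ m ∧ j ≤ m),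
        q m ^ 2 * t ^ (2 * (m : ℕ) - (i : ℕ) - (j : ℕ) + 1) /
          ((((m : ℕ) - (i : ℕ)).factorial : ℝ) * (((m : ℕ) - (j : ℕ)).factorial : ℝ) *
            ((2 * (m : ℕ) - (i : ℕ) - (j : ℕ) + 1 : ℕ) : ℝ)) := by
  set coeff : Fin n → ℝ := fun m =>
    q m ^ 2 / (((m : ℕ) - i).factorial * ((m : ℕ) - j).factorial)
  set deg : Fin n → ℕ := fun m => 2 * (m : ℕ) - i - j
  calc _ = ∫ s in (0 : ℝ)..t,
          ∑ m ∈ univ.filter (fun m => i ≤ m ∧ j ≤ m), coeff m * (t - s) ^ deg m := by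
        simp only [exp_smul_superdiag_apply_mul_apply, sum_filter, coeff, deg]
    _ = ∑ m ∈ univ.filter (fun m => i ≤ m ∧ j ≤ m),
          coeff m * (t ^ (deg m + 1) / (deg m + 1)) := by
        rw [integral_finsetSum fun m _ => (by fun_prop : Continuous _).intervalIntegrable _ _]
        simp only [integral_const_mul, integral_const_sub_pow]
    _ = _ := by
        refine sum_congr rfl fun m _ => ?_
        rw [div_mul_div_comm, Nat.cast_succ]

theorem stmt_11 (n : ℕ) (q : Fin n → ℝ) (i j : Fin n) (t : ℝ) (ht : 0 ≤ t) :
    ∫ s in (0 : ℝ)..t,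
        ∑ k : Fin n,
          (NormedSpace.exp ((t - s) • superdiag n)) i k * (q k ^ 2) *
            (NormedSpace.exp ((t - s) • superdiag n)) j k =
      ∑ m ∈ Finset.univ.filter (fun m : Fin n => i ≤ m ∧ j ≤ m),
        q m ^ 2 * t ^ (2 * (m : ℕ) - (i : ℕ) - (j : ℕ) + 1) /
          ((((m : ℕ) - (i : ℕ)).factorial : ℝ) * (((m : ℕ) - (j : ℕ)).factorial : ℝ) *
            ((2 * (m : ℕ) - (i : ℕ) - (j : ℕ) + 1 : ℕ) : ℝ)) :=
  stmt_11_general n q i j t
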